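/- Let E = {g₁,…,g_m} ⊂ G, v = Σⱼ gⱼ ⊗ δⱼ, 𝕩 = I_n ⊗ v, and for g ∈ G define A_g ∈ Mat_m(ℝ) by (A_g)_{x,y} = 1 if g_x⁻¹ g_y = g and 0 otherwise. Then for M = [m_{ij}] ∈ Mat_n(ℝG) supported on E*E = {x⁻¹y : x,y ∈ E} and P = Σ_{i,j} δ_{ij} ⊗ P^{ij} ∈ Mat_n(ℝ) ⊗ Mat_m(ℝ), the equality M = 𝕩*P𝕩 holds if and only if m_{ij}(g) = ⟨A_g, P^{ij}⟩ for all g ∈ G and all i,j, where ⟨X, Y⟩ = tr(XᵀY). -/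

import Mathlib

/-- The group-ring involution on `ℝG` determined by `g ↦ g⁻¹`. -/
noncomputable def gstar {G : Type*} [Group G] (x : MonoidAlgebra ℝ G) : MonoidAlgebra ℝ G :=
  MonoidAlgebra.ofCoeff (Finsupp.equivMapDomain (Equiv.inv G) x.coeff)

section GroupRingStar
variable {G : Type*} [Group G]

lemma gstar_single (g : G) (a : ℝ) :
    gstar (MonoidAlgebra.single g a) = MonoidAlgebra.single g⁻¹ a := by
  simp [gstar, MonoidAlgebra.ofCoeff_single, Finsupp.equivMapDomain_single]

lemma gstar_add (x y : MonoidAlgebra ℝ G) : gstar (x + y) = gstar x + gstar y :=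
  congrArg MonoidAlgebra.ofCoeff (map_add (Finsupp.domCongr (M := ℝ) (Equiv.inv G)) x.coeff y.coeff)

lemma gstar_zero : gstar (0 : MonoidAlgebra ℝ G) = 0 := by ext g; simp [gstar]

lemma gstar_gstar (x : MonoidAlgebra ℝ G) : gstar (gstar x) = x := by
  ext g; simp [gstar]

lemma gstar_mul (x y : MonoidAlgebra ℝ G) : gstar (x * y) = gstar y * gstar x := by
  induction x using MonoidAlgebra.induction_linear with
  | zero => simp [gstar_zero]
  | add f g hf hg => rw [add_mul, gstar_add, hf, hg, gstar_add, mul_add]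
  | single g a =>
    induction y using MonoidAlgebra.induction_linear with
    | zero => simp [gstar_zero]
    | add f g' hf hg => rw [mul_add, gstar_add, hf, hg, gstar_add, add_mul]
    | single h b =>
      rw [MonoidAlgebra.single_mul_single, gstar_single, gstar_single, gstar_single,
        MonoidAlgebra.single_mul_single, mul_inv_rev, mul_comm]

/-- `ℝG` as a `*`-ring, with `star` induced by `g ↦ g⁻¹`. -/
noncomputable instance groupRingStar : StarRing (MonoidAlgebra ℝ G) where
  star := gstar
  star_involutive := gstar_gstar
  star_add := gstar_add
  star_mul := gstar_mul

lemma star_of (g : G) : star (MonoidAlgebra.of ℝ G g) = MonoidAlgebra.of ℝ G g⁻¹ := by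
  show gstar _ = _
  simp [MonoidAlgebra.of_apply, gstar_single]

end GroupRingStar

/-! Each block row of `𝕩` has the single entry `g_a`, so `(𝕩*P𝕩)_{ij} = ∑_{a,b} P^{ij}_{ab} g_a⁻¹ g_b`.
Its coefficient at `g` sums `P^{ij}_{ab}` over the pairs with `g_a⁻¹ g_b = g`, which are exactly
the positions where `A_g` is `1`; so both sides of the equivalence say that `M` and `𝕩*P𝕩` have
the same coefficients. -/

namespace GramRepresentation

variable {G : Type*} [Group G] {ι κ : Type*}

lemma conjTranspose_apply_eq_ite [DecidableEq κ] (E : ι → G)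
    {X : Matrix (κ × ι) κ (MonoidAlgebra ℝ G)}
    (hX : ∀ p k, X p k = if p.1 = k then MonoidAlgebra.of ℝ G (E p.2) else 0) (k : κ) (p : κ × ι) :
    X.conjTranspose k p = if p.1 = k then MonoidAlgebra.of ℝ G (E p.2)⁻¹ else 0 := by
  rw [Matrix.conjTranspose_apply, hX]
  split
  · exact star_of _
  · exact star_zero _

lemma conjTranspose_mul_map_mul_apply [Fintype ι] [Fintype κ] [DecidableEq κ] (E : ι → G)
    {X : Matrix (κ × ι) κ (MonoidAlgebra ℝ G)}
    (hX : ∀ p k, X p k = if p.1 = k then MonoidAlgebra.of ℝ G (E p.2) else 0)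
    (P : Matrix (κ × ι) (κ × ι) ℝ) (i j : κ) :
    (X.conjTranspose * P.map (algebraMap ℝ (MonoidAlgebra ℝ G)) * X) i j =
      ∑ b, ∑ a, MonoidAlgebra.single ((E a)⁻¹ * E b) (P (i, a) (j, b)) := by
  simp only [Matrix.mul_apply, Matrix.map_apply, conjTranspose_apply_eq_ite E hX, hX,
    Finset.sum_mul, ite_mul, zero_mul, mul_ite, mul_zero, Fintype.sum_prod_type_right,
    Finset.sum_ite_eq', Finset.mem_univ, if_true]
  simp [MonoidAlgebra.of_apply, Algebra.algebraMap_eq_smul_one, MonoidAlgebra.single_mul_single]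

lemma coeff_sum_single_eq_trace [Fintype ι] [DecidableEq G] (E : ι → G) {A : G → Matrix ι ι ℝ}
    (hA : ∀ (g : G) (x y : ι), A g x y = if (E x)⁻¹ * E y = g then 1 else 0)
    (Q : Matrix ι ι ℝ) (g : G) :
    (∑ b, ∑ a, MonoidAlgebra.single ((E a)⁻¹ * E b) (Q a b)).coeff g =
      ((A g).transpose * Q).trace := by
  simp only [Matrix.trace, Matrix.diag, Matrix.mul_apply, Matrix.transpose_apply, hA, ite_mul,
    one_mul, zero_mul, MonoidAlgebra.coeff_sum, Finsupp.finsetSum_apply, MonoidAlgebra.coeff_single,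
    Finsupp.single_apply]

end GramRepresentation

theorem statement17_general {G : Type*} [Group G] [DecidableEq G] {n m : ℕ}
    (E : Fin m → G)
    (X : Matrix (Fin n × Fin m) (Fin n) (MonoidAlgebra ℝ G))
    (hX : ∀ p k, X p k = if p.1 = k then MonoidAlgebra.of ℝ G (E p.2) else 0)
    (A : G → Matrix (Fin m) (Fin m) ℝ)
    (hA : ∀ (g : G) (x y : Fin m), A g x y = if (E x)⁻¹ * E y = g then 1 else 0)
    (M : Matrix (Fin n) (Fin n) (MonoidAlgebra ℝ G))
    (P : Matrix (Fin n × Fin m) (Fin n × Fin m) ℝ) :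
    M = X.conjTranspose * P.map (algebraMap ℝ (MonoidAlgebra ℝ G)) * X ↔
      ∀ (g : G) (i j : Fin n),
        (M i j).coeff g = ((A g).transpose * Matrix.of fun (a b : Fin m) => P (i, a) (j, b)).trace := by
  have entry_coeff (g : G) (i j : Fin n) :
      ((X.conjTranspose * P.map (algebraMap ℝ (MonoidAlgebra ℝ G)) * X) i j).coeff g =
        ((A g).transpose * Matrix.of fun (a b : Fin m) => P (i, a) (j, b)).trace := by
    rw [GramRepresentation.conjTranspose_mul_map_mul_apply E hX]
    exact GramRepresentation.coeff_sum_single_eq_trace E hA _ g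
  constructor
  · rintro rfl g i j
    exact entry_coeff g i j
  · intro h
    ext i j g
    rw [h g i j, entry_coeff]

/-- for `M` supported on `E*E`, the identity `M = 𝕩*P𝕩` holds if and
only if `m_{ij}(g) = ⟨A_g, P^{ij}⟩` for all `g ∈ G` and all `i, j`, where
`(A_g)_{x,y} = 1` iff `g_x⁻¹g_y = g` and `⟨X, Y⟩ = tr(XᵀY)`. -/
theorem statement17 {G : Type*} [Group G] [DecidableEq G] {n m : ℕ}
    (E : Fin m → G) (hE : Function.Injective E)
    (X : Matrix (Fin n × Fin m) (Fin n) (MonoidAlgebra ℝ G))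
    (hX : ∀ p k, X p k = if p.1 = k then MonoidAlgebra.of ℝ G (E p.2) else 0)
    (A : G → Matrix (Fin m) (Fin m) ℝ)
    (hA : ∀ (g : G) (x y : Fin m), A g x y = if (E x)⁻¹ * E y = g then 1 else 0)
    (M : Matrix (Fin n) (Fin n) (MonoidAlgebra ℝ G))
    (hsupp : ∀ (i j : Fin n) (g : G), (M i j).coeff g ≠ 0 → ∃ x y : Fin m, (E x)⁻¹ * E y = g)
    (P : Matrix (Fin n × Fin m) (Fin n × Fin m) ℝ) :
    M = X.conjTranspose * P.map (algebraMap ℝ (MonoidAlgebra ℝ G)) * X ↔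
      ∀ (g : G) (i j : Fin n),
        (M i j).coeff g = ((A g).transpose * Matrix.of fun (a b : Fin m) => P (i, a) (j, b)).trace :=
  statement17_general E X hX A hA M P
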